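/- For every graph G and every integer t ≥ 1, the smallest signless Laplacian eigenvalue of the blowup satisfies q_min(G^(t)) = t·q_min(G). -/

import Mathlib

open Matrix SimpleGraph Finset

/-- The signless Laplacian matrix `Q(G) = D + A` of a finite simple graph `G`. -/
noncomputable def signlessLaplacian {V : Type} [Fintype V] [DecidableEq V]
    (G : SimpleGraph V) : Matrix V V ℝ :=
  letI := Classical.decRel G.Adj
  Matrix.diagonal (fun v => (G.degree v : ℝ)) + G.adjMatrix ℝ

theorem signlessLaplacian_isHermitian {V : Type} [Fintype V] [DecidableEq V]
    (G : SimpleGraph V) : (signlessLaplacian G).IsHermitian := by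
  letI := Classical.decRel G.Adj
  unfold signlessLaplacian
  refine Matrix.IsHermitian.add (Matrix.isHermitian_diagonal _) ?_
  rw [Matrix.IsHermitian, conjTranspose_eq_transpose_of_trivial]
  exact G.isSymm_adjMatrix

/-- `qmin G` is the smallest eigenvalue of the signless Laplacian of `G`. -/
noncomputable def qmin {V : Type} [Fintype V] [DecidableEq V] (G : SimpleGraph V) : ℝ :=
  ⨅ i, (signlessLaplacian_isHermitian G).eigenvalues i

/-- The blowup `G^(t)`: each vertex `u` of `G` is replaced by `t` independent vertices,
and each edge by a complete bipartite graph between the corresponding sets. -/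
def blowup {V : Type} (G : SimpleGraph V) (t : ℕ) : SimpleGraph (V × Fin t) :=
  G.comap Prod.fst

/-- The degree of a vertex, as a real number. -/
noncomputable def degR {V : Type} [Fintype V] (G : SimpleGraph V) (v : V) : ℝ :=
  letI := Classical.decRel G.Adj
  (G.degree v : ℝ)

/-!
Write `Q = Q(G)`, `d` for the degree vector, `c = q_min(G)` and `L = t I - J` for the Laplacian
of the complete graph `K_t`. Entrywise,
`Q(G^(t)) - t c I = P (Q - c I) Pᵀ + diag(d - c) ⊗ L`, where `P` is the `0/1` matrix of the
projection `V × [t] → V`. Here `Q - c I` and `L` are positive semidefinite, and so is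
`diag(d - c)` because `c ≤ δ(G)`; hence `q_min(G^(t)) ≥ t c`. Conversely, an eigenvector of `Q`
for `c`, extended constantly along the fibres of `P`, is an eigenvector of `Q(G^(t))` for `t c`.
-/

open scoped Kronecker MatrixOrder ComplexOrder

namespace Matrix

theorem submatrix_fst_mulVec_comp_fst {R m n ι : Type*} [NonUnitalNonAssocSemiring R]
    [Fintype n] [Fintype ι] (M : Matrix m n R) (v : n → R) :
    (M.submatrix Prod.fst Prod.fst : Matrix (m × ι) (n × ι) R) *ᵥ (v ∘ Prod.fst) =
      (Fintype.card ι • (M *ᵥ v)) ∘ Prod.fst := by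
  ext ⟨u, i⟩
  simp [mulVec, dotProduct, Fintype.sum_prod_type, Finset.smul_sum]

namespace IsHermitian

variable {𝕜 n : Type*} [RCLike 𝕜] [Fintype n] [DecidableEq n] {A : Matrix n n 𝕜}

theorem le_iInf_eigenvalues_iff [Nonempty n] (hA : A.IsHermitian) {r : ℝ} :
    r ≤ ⨅ i, hA.eigenvalues i ↔ (A - r • 1).PosSemidef := by
  rw [← le_iff, ← Algebra.algebraMap_eq_smul_one,
    algebraMap_le_iff_le_spectrum hA.isSelfAdjoint, hA.spectrum_real_eq_range_eigenvalues,
    Set.forall_mem_range, le_ciInf_iff (Set.finite_range _).bddBelow]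

theorem exists_mulVec_eq_iInf_eigenvalues_smul [Nonempty n] (hA : A.IsHermitian) :
    ∃ v : n → 𝕜, v ≠ 0 ∧ A *ᵥ v = (⨅ i, hA.eigenvalues i) • v := by
  obtain ⟨i, hi⟩ := exists_eq_ciInf_of_finite (f := hA.eigenvalues)
  exact ⟨_, (WithLp.ofLp_eq_zero 2).ne.2 (hA.eigenvectorBasis.orthonormal.ne_zero i),
    hi ▸ hA.mulVec_eigenvectorBasis i⟩

theorem iInf_eigenvalues_le_of_mulVec_eq_smul (hA : A.IsHermitian) {v : n → 𝕜} (hv : v ≠ 0)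
    {μ : ℝ} (h : A *ᵥ v = μ • v) : ⨅ i, hA.eigenvalues i ≤ μ := by
  have hμ : μ ∈ spectrum ℝ A := by
    apply spectrum.of_algebraMap_mem 𝕜
    rw [← spectrum_toLin', ← Module.End.hasEigenvalue_iff_mem_spectrum]
    refine Module.End.hasEigenvalue_of_hasEigenvector ⟨?_, hv⟩
    rwa [Module.End.mem_eigenspace_iff, toLin'_apply, ← RCLike.real_smul_eq_coe_smul]
  obtain ⟨i, rfl⟩ := hA.spectrum_real_eq_range_eigenvalues ▸ hμ
  exact ciInf_le (Set.finite_range _).bddBelow i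

end IsHermitian

end Matrix

namespace SimpleGraph

variable {V : Type} (G : SimpleGraph V) (t : ℕ)

@[simp]
theorem blowup_adj {p q : V × Fin t} : (blowup G t).Adj p q ↔ G.Adj p.1 q.1 :=
  Iff.rfl

variable [DecidableRel G.Adj]

instance : DecidableRel (blowup G t).Adj := inferInstanceAs (DecidableRel (G.comap Prod.fst).Adj)

theorem adjMatrix_blowup :
    (blowup G t).adjMatrix ℝ = (G.adjMatrix ℝ).submatrix Prod.fst Prod.fst := by
  ext p q
  simp [adjMatrix_apply]

variable [Fintype V]

theorem degree_blowup (p : V × Fin t) : (blowup G t).degree p = G.degree p.1 * t := by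
  have : (blowup G t).neighborFinset p = G.neighborFinset p.1 ×ˢ univ := by
    ext q
    simp
  rw [← card_neighborFinset_eq_degree, this, card_product, card_neighborFinset_eq_degree,
    card_univ, Fintype.card_fin]

variable [DecidableEq V]

theorem signlessLaplacian_eq :
    signlessLaplacian G = diagonal (fun v => (G.degree v : ℝ)) + G.adjMatrix ℝ := by
  unfold signlessLaplacian
  congr!

theorem lapMatrix_top_apply (i j : Fin t) :
    (⊤ : SimpleGraph (Fin t)).lapMatrix ℝ i j = (if i = j then (t : ℝ) else 0) - 1 := by
  by_cases h : i = j
  · subst h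
    simp [lapMatrix, degMatrix, Nat.cast_sub (Fin.pos i)]
  · simp [lapMatrix, degMatrix, h]

theorem signlessLaplacian_blowup_sub_smul_one (c : ℝ) :
    signlessLaplacian (blowup G t) - ((t : ℝ) * c) • 1 =
      (signlessLaplacian G - c • 1).submatrix Prod.fst Prod.fst +
        diagonal (fun u => (G.degree u : ℝ) - c) ⊗ₖ (⊤ : SimpleGraph (Fin t)).lapMatrix ℝ := by
  ext ⟨u, i⟩ ⟨v, j⟩
  simp only [signlessLaplacian_eq, degree_blowup, adjMatrix_blowup]
  by_cases huv : u = v <;> by_cases hij : i = j <;> simp [huv, hij, lapMatrix_top_apply]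
  ring

theorem signlessLaplacian_blowup_mulVec_comp_fst (v : V → ℝ) :
    signlessLaplacian (blowup G t) *ᵥ (v ∘ Prod.fst) =
      (t • (signlessLaplacian G *ᵥ v)) ∘ Prod.fst := by
  ext ⟨u, i⟩
  simp only [signlessLaplacian_eq, add_mulVec, adjMatrix_blowup, submatrix_fst_mulVec_comp_fst]
  simp [mulVec_diagonal, degree_blowup]
  ring

end SimpleGraph

section qmin

variable {V : Type} [Fintype V] [DecidableEq V] (G : SimpleGraph V)

theorem qmin_of_isEmpty [IsEmpty V] : qmin G = 0 :=
  Real.iInf_of_isEmpty _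

theorem le_qmin_iff [Nonempty V] {c : ℝ} :
    c ≤ qmin G ↔ (signlessLaplacian G - c • 1).PosSemidef :=
  (signlessLaplacian_isHermitian G).le_iInf_eigenvalues_iff

theorem qmin_le_degree [DecidableRel G.Adj] (u : V) : qmin G ≤ G.degree u := by
  have : Nonempty V := ⟨u⟩
  have := ((le_qmin_iff G).mp le_rfl).diag_nonneg (i := u)
  simpa [G.signlessLaplacian_eq] using this

theorem mul_qmin_le_qmin_blowup (t : ℕ) [Nonempty (V × Fin t)] :
    t * qmin G ≤ qmin (blowup G t) := by
  classical
  have : Nonempty V := .map Prod.fst ‹_›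
  have hQ : (signlessLaplacian G - qmin G • 1).PosSemidef := (le_qmin_iff G).mp le_rfl
  have hdeg : (diagonal fun u => (G.degree u : ℝ) - qmin G).PosSemidef :=
    .diagonal fun u => sub_nonneg.mpr (qmin_le_degree G u)
  rw [le_qmin_iff, G.signlessLaplacian_blowup_sub_smul_one]
  exact (hQ.submatrix _).add (hdeg.kronecker (posSemidef_lapMatrix ℝ ⊤))

theorem qmin_blowup_le_mul_qmin (t : ℕ) [Nonempty (V × Fin t)] :
    qmin (blowup G t) ≤ t * qmin G := by
  classical
  obtain ⟨⟨u, i⟩⟩ := ‹Nonempty (V × Fin t)›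
  have : Nonempty V := ⟨u⟩
  obtain ⟨v, hv, hQv⟩ := (signlessLaplacian_isHermitian G).exists_mulVec_eq_iInf_eigenvalues_smul
  obtain ⟨w, hw⟩ := Function.ne_iff.mp hv
  refine (signlessLaplacian_isHermitian _).iInf_eigenvalues_le_of_mulVec_eq_smul
    (v := v ∘ Prod.fst) (Function.ne_iff.mpr ⟨(w, i), hw⟩) ?_
  rw [G.signlessLaplacian_blowup_mulVec_comp_fst, hQv]
  ext p
  simp only [Function.comp_apply, Pi.smul_apply, smul_eq_mul, qmin]
  rw [nsmul_eq_mul]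
  ring

end qmin

theorem qmin_blowup_general {V : Type} [Fintype V] [DecidableEq V]
    (G : SimpleGraph V) (t : ℕ) :
    qmin (blowup G t) = (t : ℝ) * qmin G := by
  rcases isEmpty_or_nonempty (V × Fin t) with h | h
  · rw [qmin_of_isEmpty]
    rcases isEmpty_prod.mp h with hV | ht
    · rw [qmin_of_isEmpty, mul_zero]
    · rw [← Fintype.card_fin t, Fintype.card_eq_zero, Nat.cast_zero, zero_mul]
  · exact le_antisymm (qmin_blowup_le_mul_qmin G t) (mul_qmin_le_qmin_blowup G t)

/-- For every graph `G` and every `t ≥ 1`,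
`qmin(G^(t)) = t · qmin(G)`. -/
theorem qmin_blowup {V : Type} [Fintype V] [DecidableEq V]
    (G : SimpleGraph V) (t : ℕ) (ht : 1 ≤ t) :
    qmin (blowup G t) = (t : ℝ) * qmin G :=
  qmin_blowup_general G t
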